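/- (Reverse Pinsker-type bound for the dilated entropy on a treeplex.) Let Z ⊆ ℝ^P be a treeplex with dilated entropy Ψ^dil_α, let z* ∈ Z, and let z ∈ Z have all coordinates strictly positive, with q_i = z_i/z_{p_i} and q*_i = z*_i/z*_{p_i}. Then D_{Ψ^dil_α}(z*, z) ≤ ‖α‖_∞ ( Σ_{i∈supp(z*)} (4P/z*_i) · (z*_i − z_i)²/q_i + Σ_{i∉supp(z*)} z*_{p_i} q_i ) ≤ 4P‖α‖_∞ ‖z* − z‖₁ / (min_{i∈supp(z*)} z*_i z_i). -/
import Mathlib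


open Finset Filter Topology

noncomputable section

/-- Squared Euclidean norm on `ℝ^n`. -/
def sqnorm {n : ℕ} (z : Fin n → ℝ) : ℝ := ∑ i, (z i) ^ 2

/-- Euclidean (2-)norm on `ℝ^n`. -/
def norm2 {n : ℕ} (z : Fin n → ℝ) : ℝ := Real.sqrt (sqnorm z)

/-- 1-norm on `ℝ^n`. -/
def norm1 {n : ℕ} (z : Fin n → ℝ) : ℝ := ∑ i, |z i|

/-- Dot product on `ℝ^n`. -/
def dotp {n : ℕ} (a b : Fin n → ℝ) : ℝ := ∑ i, a i * b i

/-- Treeplexes (Hoda et al.): probability simplexes, Cartesian products, and branching. -/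
inductive IsTreeplex : {n : ℕ} → Set (Fin n → ℝ) → Prop
  | simplex (m : ℕ) :
      IsTreeplex {x : Fin (m + 1) → ℝ | (∀ i, 0 ≤ x i) ∧ (∑ i, x i) = 1}
  | prod {m k : ℕ} {S : Set (Fin m → ℝ)} {T : Set (Fin k → ℝ)} :
      IsTreeplex S → IsTreeplex T →
      IsTreeplex {z : Fin (m + k) → ℝ | ∃ u ∈ S, ∃ v ∈ T, z = Fin.append u v}
  | branch {m k : ℕ} {S : Set (Fin m → ℝ)} {T : Set (Fin k → ℝ)} (i : Fin m) :
      IsTreeplex S → IsTreeplex T →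
      IsTreeplex {z : Fin (m + k) → ℝ | ∃ u ∈ S, ∃ v ∈ T,
        z = Fin.append u (fun j => u i * v j)}

/-- A point `z = (x, y)` of the product space `ℝ^M × ℝ^N`. -/
abbrev Pt (M N : ℕ) := (Fin M → ℝ) × (Fin N → ℝ)

def dotPt {M N : ℕ} (a b : Pt M N) : ℝ := dotp a.1 b.1 + dotp a.2 b.2

def sqnormPt {M N : ℕ} (z : Pt M N) : ℝ := sqnorm z.1 + sqnorm z.2

def norm2Pt {M N : ℕ} (z : Pt M N) : ℝ := Real.sqrt (sqnormPt z)

def norm1Pt {M N : ℕ} (z : Pt M N) : ℝ := norm1 z.1 + norm1 z.2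

/-- The game operator `F(z) = (G y, -Gᵀ x)`. -/
def Fop {M N : ℕ} (G : Matrix (Fin M) (Fin N) ℝ) (z : Pt M N) : Pt M N :=
  (G.mulVec z.2, -(G.transpose.mulVec z.1))

/-- Bregman divergence of `ψ` (via the Fréchet derivative). -/
def Dbreg {M N : ℕ} (ψ : Pt M N → ℝ) (u v : Pt M N) : ℝ :=
  ψ u - ψ v - fderiv ℝ ψ v (u - v)

/-- Bregman divergence on a single space. -/
def Dbreg1 {n : ℕ} (ψ : (Fin n → ℝ) → ℝ) (u v : Fin n → ℝ) : ℝ :=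
  ψ u - ψ v - fderiv ℝ ψ v (u - v)

/-- Optimistic online mirror descent with Bregman-divergence function `D`,
step size `η`, iterates `z` and `zh` (the latter is `ẑ`), started from an
arbitrary `ẑ₁ = z₀ ∈ Z`. -/
def IsOOMD {M N : ℕ} (G : Matrix (Fin M) (Fin N) ℝ) (Z : Set (Pt M N))
    (D : Pt M N → Pt M N → ℝ) (η : ℝ) (z zh : ℕ → Pt M N) : Prop :=
  z 0 ∈ Z ∧ zh 1 = z 0 ∧
  (∀ t : ℕ, 1 ≤ t → z t ∈ Z ∧
    ∀ w ∈ Z, η * dotPt (z t) (Fop G (z (t - 1))) + D (z t) (zh t) ≤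
      η * dotPt w (Fop G (z (t - 1))) + D w (zh t)) ∧
  (∀ t : ℕ, 1 ≤ t → zh (t + 1) ∈ Z ∧
    ∀ w ∈ Z, η * dotPt (zh (t + 1)) (Fop G (z t)) + D (zh (t + 1)) (zh t) ≤
      η * dotPt w (Fop G (z t)) + D w (zh t))

def maxPayoff {M N : ℕ} (G : Matrix (Fin M) (Fin N) ℝ) (Y : Set (Fin N → ℝ))
    (x : Fin M → ℝ) : ℝ :=
  sSup ((fun y => dotp x (G.mulVec y)) '' Y)

def minPayoff {M N : ℕ} (G : Matrix (Fin M) (Fin N) ℝ) (X : Set (Fin M → ℝ))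
    (y : Fin N → ℝ) : ℝ :=
  sInf ((fun x => dotp x (G.mulVec y)) '' X)

/-- `X* = argmin_{x ∈ X} max_{y ∈ Y} xᵀGy`. -/
def Xstar {M N : ℕ} (G : Matrix (Fin M) (Fin N) ℝ) (X : Set (Fin M → ℝ))
    (Y : Set (Fin N → ℝ)) : Set (Fin M → ℝ) :=
  {x ∈ X | ∀ x' ∈ X, maxPayoff G Y x ≤ maxPayoff G Y x'}

/-- `Y* = argmax_{y ∈ Y} min_{x ∈ X} xᵀGy`. -/
def Ystar {M N : ℕ} (G : Matrix (Fin M) (Fin N) ℝ) (X : Set (Fin M → ℝ))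
    (Y : Set (Fin N → ℝ)) : Set (Fin N → ℝ) :=
  {y ∈ Y | ∀ y' ∈ Y, minPayoff G X y' ≤ minPayoff G X y}

/-- The set of Nash equilibria `Z* = X* × Y*`. -/
def NashSet {M N : ℕ} (G : Matrix (Fin M) (Fin N) ℝ) (X : Set (Fin M → ℝ))
    (Y : Set (Fin N → ℝ)) : Set (Pt M N) :=
  (Xstar G X Y) ×ˢ (Ystar G X Y)

/-- Generalized KL divergence (Bregman divergence of the vanilla entropy),
with the convention `0 ln 0 = 0`. -/
def KLgen {n : ℕ} (u v : Fin n → ℝ) : ℝ :=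
  ∑ i, (u i * Real.log (u i / v i) - u i + v i)

def KLgenPt {M N : ℕ} (u v : Pt M N) : ℝ := KLgen u.1 v.1 + KLgen u.2 v.2

/-- The combinatorial structure of a treeplex in sequence form: indices `Fin n`,
information sets `Fin K`, the information set `owner i = h(i)` of each index,
and the parent index `parent h = σ(h)` of each information set (`none` for the
root convention `z_{σ(h)} = 1`), with an acyclicity witness. -/
structure TreeplexData (n K : ℕ) where
  owner : Fin n → Fin K
  parent : Fin K → Option (Fin n)
  rank : Fin K → ℕ
  parent_rank : ∀ (h : Fin K) (j : Fin n), parent h = some j → rank (owner j) < rank h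

/-- `z_{σ(h)}`, with the convention that it is `1` when `h` has no parent. -/
def TreeplexData.parentVal {n K : ℕ} (T : TreeplexData n K) (z : Fin n → ℝ) (h : Fin K) : ℝ :=
  (T.parent h).elim 1 z

/-- The treeplex determined by `T`: `z ≥ 0` with `∑_{i ∈ Ω_h} z_i = z_{σ(h)}`. -/
def TreeplexData.set {n K : ℕ} (T : TreeplexData n K) : Set (Fin n → ℝ) :=
  {z | (∀ i, 0 ≤ z i) ∧
    ∀ h : Fin K, (∑ i ∈ Finset.univ.filter (fun i => T.owner i = h), z i) = T.parentVal z h}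

/-- `q_i = z_i / z_{p_i}`. -/
def TreeplexData.q {n K : ℕ} (T : TreeplexData n K) (z : Fin n → ℝ) (i : Fin n) : ℝ :=
  z i / T.parentVal z (T.owner i)

/-- The dilated entropy `Ψ^dil_α(z) = ∑_i α_{h(i)} z_i ln q_i`. -/
def dilEnt {n K : ℕ} (T : TreeplexData n K) (α : Fin K → ℝ) (z : Fin n → ℝ) : ℝ :=
  ∑ i, α (T.owner i) * z i * Real.log (T.q z i)

/-- Bregman divergence of the dilated entropy:
`D(u, z) = ∑_i α_{h(i)} u_i ln(q^u_i / q^z_i)`, with `0 ln 0 = 0`. -/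
def dilEntBreg {n K : ℕ} (T : TreeplexData n K) (α : Fin K → ℝ) (u z : Fin n → ℝ) : ℝ :=
  ∑ i, α (T.owner i) * u i * Real.log (T.q u i / T.q z i)

/-- Coordinates of a pair `z = (x, y)` indexed by `Fin M ⊕ Fin N`. -/
def coordsOf {M N : ℕ} (z : Pt M N) : Fin M ⊕ Fin N → ℝ := Sum.elim z.1 z.2

section Aux
variable {P K : ℕ} (T : TreeplexData P K)

lemma coord_le_parentVal (z : Fin P → ℝ) (hz : z ∈ T.set) (i : Fin P) :
    z i ≤ T.parentVal z (T.owner i) := by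
  rw [← hz.2 (T.owner i)]
  exact Finset.single_le_sum (fun j _ => hz.1 j) (by simp)

lemma coord_le_one (z : Fin P → ℝ) (hz : z ∈ T.set) (i : Fin P) : z i ≤ 1 := by
  suffices H : ∀ n (i : Fin P), T.rank (T.owner i) ≤ n → z i ≤ 1 from H _ i le_rfl
  intro n
  induction n with
  | zero =>
    intro i hi
    refine (coord_le_parentVal T z hz i).trans ?_
    unfold TreeplexData.parentVal
    cases hp : T.parent (T.owner i) with
    | none => simp
    | some j => exact absurd (T.parent_rank _ _ hp) (by omega)
  | succ n ih =>
    intro i hi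
    refine (coord_le_parentVal T z hz i).trans ?_
    unfold TreeplexData.parentVal
    cases hp : T.parent (T.owner i) with
    | none => simp
    | some j =>
      have := T.parent_rank _ _ hp
      exact ih j (by omega)

lemma parentVal_le_one (z : Fin P → ℝ) (hz : z ∈ T.set) (h : Fin K) :
    T.parentVal z h ≤ 1 := by
  unfold TreeplexData.parentVal
  cases hp : T.parent h with
  | none => simp
  | some j => simpa using coord_le_one T z hz j

lemma parentVal_pos (z : Fin P → ℝ) (hzpos : ∀ i, 0 < z i) (h : Fin K) :
    0 < T.parentVal z h := by
  unfold TreeplexData.parentVal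
  cases hp : T.parent h with
  | none => simp
  | some j => simpa using hzpos j

lemma parentVal_nonneg (z : Fin P → ℝ) (hz : z ∈ T.set) (h : Fin K) :
    0 ≤ T.parentVal z h := by
  unfold TreeplexData.parentVal
  cases hp : T.parent h with
  | none => simp
  | some j => simpa using hz.1 j

lemma owner_surjective (z : Fin P → ℝ) (hz : z ∈ T.set) (hzpos : ∀ i, 0 < z i) :
    Function.Surjective T.owner := by
  intro h
  by_contra hc
  push_neg at hc
  have h1 : (∑ i ∈ Finset.univ.filter (fun i => T.owner i = h), z i) = 0 := by
    rw [Finset.sum_eq_zero]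
    intro i hi
    simp only [Finset.mem_filter] at hi
    exact absurd hi.2 (hc i)
  rw [hz.2 h] at h1
  exact absurd h1 (ne_of_gt (parentVal_pos T z hzpos h))

lemma exists_root (hK : 0 < K) : ∃ h : Fin K, T.parent h = none := by
  have hne : (Finset.univ : Finset (Fin K)).Nonempty := by
    simpa [Finset.univ_nonempty_iff] using Fin.pos_iff_nonempty.mp hK
  obtain ⟨h, -, hmin⟩ := Finset.exists_min_image Finset.univ T.rank hne
  refine ⟨h, ?_⟩
  cases hp : T.parent h with
  | none => rfl
  | some j =>
    have := T.parent_rank _ _ hp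
    have := hmin (T.owner j) (Finset.mem_univ _)
    omega

/-- The central polynomial/log inequality per coordinate (support case). -/
lemma key_ineq (a b A B : ℝ) (ha : 0 < a) (hb : 0 < b) (hA : 0 < A) (hB : 0 < B)
    (haA : a ≤ A) :
    a * Real.log ((a / A) / (b / B)) ≤
      2 * (a - b) ^ 2 / (a * (b / B)) + 2 * b * (A - B) ^ 2 / (A * B)
        + (a - A * (b / B)) := by
  have hx : 0 < (a / A) / (b / B) := by positivity
  have hlog := Real.log_le_sub_one_of_pos hx
  have h1 : a * Real.log ((a / A) / (b / B)) ≤ a * ((a / A) / (b / B)) - a := by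
    nlinarith [mul_le_mul_of_nonneg_left hlog ha.le]
  refine h1.trans ?_
  have heq : (2 * (a - b) ^ 2 / (a * (b / B)) + 2 * b * (A - B) ^ 2 / (A * B)
        + (a - A * (b / B))) - (a * ((a / A) / (b / B)) - a) =
      (a * ((a - b) * B + b * (A - B)) ^ 2 + 2 * (A - a) * B ^ 2 * (a - b) ^ 2)
        / (a * b * A * B) := by
    field_simp
    ring
  have hnum : 0 ≤ a * ((a - b) * B + b * (A - B)) ^ 2 + 2 * (A - a) * B ^ 2 * (a - b) ^ 2 := by
    have h2 : 0 ≤ A - a := by linarith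
    positivity
  have hden : (0:ℝ) < a * b * A * B := by positivity
  nlinarith [div_nonneg hnum hden.le, heq]

/-- Lower bound per coordinate (support case): `a - A*(b/B) ≤ a * log((a/A)/(b/B))`. -/
lemma key_lower (a b A B : ℝ) (ha : 0 < a) (hb : 0 < b) (hA : 0 < A) (hB : 0 < B) :
    a - A * (b / B) ≤ a * Real.log ((a / A) / (b / B)) := by
  set x := (a / A) / (b / B) with hxdef
  have hx : 0 < x := by positivity
  have hlog := Real.log_le_sub_one_of_pos (show (0:ℝ) < x⁻¹ by positivity)
  rw [Real.log_inv] at hlog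
  have h1 : 1 - x⁻¹ ≤ Real.log x := by linarith
  have h2 : a * (1 - x⁻¹) ≤ a * Real.log x := mul_le_mul_of_nonneg_left h1 ha.le
  have h3 : a * (1 - x⁻¹) = a - A * (b / B) := by
    rw [hxdef]
    field_simp
  linarith

end Aux

section PerH
variable {P K : ℕ}

lemma per_h (T : TreeplexData P K) (zs z : Fin P → ℝ) (hzs : zs ∈ T.set)
    (hz : z ∈ T.set) (hzpos : ∀ i, 0 < z i) (h : Fin K) :
    0 ≤ (∑ i ∈ Finset.univ.filter (fun i => T.owner i = h),
          zs i * Real.log (T.q zs i / T.q z i)) ∧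
    (∑ i ∈ Finset.univ.filter (fun i => T.owner i = h),
          zs i * Real.log (T.q zs i / T.q z i)) ≤
      (∑ i ∈ Finset.univ.filter (fun i => T.owner i = h),
        (if 0 < zs i then 2 * (zs i - z i) ^ 2 / (zs i * T.q z i)
         else T.parentVal zs (T.owner i) * T.q z i)) +
      2 * (T.parentVal zs h - T.parentVal z h) ^ 2 / T.parentVal zs h := by
  classical
  set Ω := Finset.univ.filter (fun i => T.owner i = h) with hΩ
  set A := T.parentVal zs h with hAdef
  set B := T.parentVal z h with hBdef
  have hB : 0 < B := parentVal_pos T z hzpos h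
  have hA0 : 0 ≤ A := parentVal_nonneg T zs hzs h
  have hsum_zs : ∑ i ∈ Ω, zs i = A := hzs.2 h
  have hsum_z : ∑ i ∈ Ω, z i = B := hz.2 h
  have howner : ∀ i ∈ Ω, T.owner i = h := fun i hi => (Finset.mem_filter.mp hi).2
  have hq_zs : ∀ i ∈ Ω, T.q zs i = zs i / A := by
    intro i hi; rw [TreeplexData.q, howner i hi]
  have hq_z : ∀ i ∈ Ω, T.q z i = z i / B := by
    intro i hi; rw [TreeplexData.q, howner i hi]
  have hpV : ∀ i ∈ Ω, T.parentVal zs (T.owner i) = A := by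
    intro i hi; rw [howner i hi]
  rcases eq_or_lt_of_le hA0 with hA | hA
  · -- A = 0 : all zs in fiber are 0
    have hz0 : ∀ i ∈ Ω, zs i = 0 := by
      intro i hi
      have := (Finset.sum_eq_zero_iff_of_nonneg (fun j _ => hzs.1 j)).mp
        (hsum_zs.trans hA.symm) i hi
      exact this
    have hT0 : (∑ i ∈ Ω, zs i * Real.log (T.q zs i / T.q z i)) = 0 :=
      Finset.sum_eq_zero fun i hi => by rw [hz0 i hi, zero_mul]
    constructor
    · rw [hT0]
    · rw [hT0]
      have h1 : (∑ i ∈ Ω,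
          (if 0 < zs i then 2 * (zs i - z i) ^ 2 / (zs i * T.q z i)
           else T.parentVal zs (T.owner i) * T.q z i)) = 0 := by
        refine Finset.sum_eq_zero fun i hi => ?_
        rw [if_neg (by rw [hz0 i hi]; exact lt_irrefl 0), hpV i hi, ← hA, zero_mul]
      rw [h1, ← hA]
      simp
  · -- 0 < A
    have hupper : ∀ i ∈ Ω, zs i * Real.log (T.q zs i / T.q z i) ≤
        ((if 0 < zs i then 2 * (zs i - z i) ^ 2 / (zs i * T.q z i)
           else T.parentVal zs (T.owner i) * T.q z i)
         + (if 0 < zs i then 2 * z i * (A - B) ^ 2 / (A * B) else 0))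
         + ((if 0 < zs i then zs i else 0) - A * (z i / B)) := by
      intro i hi
      rw [hq_zs i hi, hq_z i hi, hpV i hi]
      by_cases hzi : 0 < zs i
      · rw [if_pos hzi, if_pos hzi, if_pos hzi]
        have hle : zs i ≤ A := by
          have := coord_le_parentVal T zs hzs i
          rwa [howner i hi] at this
        have := key_ineq (zs i) (z i) A B hzi (hzpos i) hA hB hle
        linarith
      · have h0 : zs i = 0 := le_antisymm (not_lt.mp hzi) (hzs.1 i)
        rw [if_neg hzi, if_neg hzi, if_neg hzi, h0, zero_mul]
        have : A * (z i / B) = A * (z i / B) := rfl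
        linarith [le_refl (A * (z i / B))]
    have hlower : ∀ i ∈ Ω,
        ((if 0 < zs i then zs i else 0) - (if 0 < zs i then A * (z i / B) else 0)) ≤
          zs i * Real.log (T.q zs i / T.q z i) := by
      intro i hi
      rw [hq_zs i hi, hq_z i hi]
      by_cases hzi : 0 < zs i
      · rw [if_pos hzi, if_pos hzi]
        exact key_lower (zs i) (z i) A B hzi (hzpos i) hA hB
      · have h0 : zs i = 0 := le_antisymm (not_lt.mp hzi) (hzs.1 i)
        rw [if_neg hzi, if_neg hzi, h0, zero_mul, sub_zero]
    -- helper sums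
    have hsum_ind : (∑ i ∈ Ω, (if 0 < zs i then zs i else 0)) = A := by
      rw [← hsum_zs]
      refine Finset.sum_congr rfl fun i hi => ?_
      by_cases hzi : 0 < zs i
      · rw [if_pos hzi]
      · rw [if_neg hzi, le_antisymm (not_lt.mp hzi) (hzs.1 i)]
    have hsum_Az : (∑ i ∈ Ω, A * (z i / B)) = A := by
      have : ∀ i ∈ Ω, A * (z i / B) = (A / B) * z i := fun i _ => by ring
      rw [Finset.sum_congr rfl this, ← Finset.mul_sum, hsum_z]
      field_simp
    constructor
    · calc (0:ℝ) = (∑ i ∈ Ω, (if 0 < zs i then zs i else 0))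
            - (∑ i ∈ Ω, A * (z i / B)) := by rw [hsum_ind, hsum_Az, sub_self]
        _ ≤ (∑ i ∈ Ω, (if 0 < zs i then zs i else 0))
            - (∑ i ∈ Ω, (if 0 < zs i then A * (z i / B) else 0)) := by
            have : (∑ i ∈ Ω, (if 0 < zs i then A * (z i / B) else 0)) ≤
                ∑ i ∈ Ω, A * (z i / B) := by
              refine Finset.sum_le_sum fun i hi => ?_
              by_cases hzi : 0 < zs i
              · rw [if_pos hzi]
              · rw [if_neg hzi]
                exact mul_nonneg hA.le (div_nonneg (hzpos i).le hB.le)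
            linarith
        _ = ∑ i ∈ Ω, ((if 0 < zs i then zs i else 0)
              - (if 0 < zs i then A * (z i / B) else 0)) := by
            rw [Finset.sum_sub_distrib]
        _ ≤ _ := Finset.sum_le_sum hlower
    · calc (∑ i ∈ Ω, zs i * Real.log (T.q zs i / T.q z i))
          ≤ ∑ i ∈ Ω, (((if 0 < zs i then 2 * (zs i - z i) ^ 2 / (zs i * T.q z i)
              else T.parentVal zs (T.owner i) * T.q z i)
            + (if 0 < zs i then 2 * z i * (A - B) ^ 2 / (A * B) else 0))
            + ((if 0 < zs i then zs i else 0) - A * (z i / B))) :=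
            Finset.sum_le_sum hupper
        _ = (∑ i ∈ Ω, (if 0 < zs i then 2 * (zs i - z i) ^ 2 / (zs i * T.q z i)
              else T.parentVal zs (T.owner i) * T.q z i))
            + (∑ i ∈ Ω, (if 0 < zs i then 2 * z i * (A - B) ^ 2 / (A * B) else 0))
            + ((∑ i ∈ Ω, (if 0 < zs i then zs i else 0)) - ∑ i ∈ Ω, A * (z i / B)) := by
            rw [Finset.sum_add_distrib, Finset.sum_add_distrib, Finset.sum_sub_distrib]
        _ ≤ (∑ i ∈ Ω, (if 0 < zs i then 2 * (zs i - z i) ^ 2 / (zs i * T.q z i)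
              else T.parentVal zs (T.owner i) * T.q z i))
            + 2 * (A - B) ^ 2 / A := by
            rw [hsum_ind, hsum_Az, sub_self, add_zero]
            have h2 : (∑ i ∈ Ω, (if 0 < zs i then 2 * z i * (A - B) ^ 2 / (A * B) else 0)) ≤
                2 * (A - B) ^ 2 / A := by
              have hle : (∑ i ∈ Ω, (if 0 < zs i then 2 * z i * (A - B) ^ 2 / (A * B) else 0)) ≤
                  ∑ i ∈ Ω, 2 * z i * (A - B) ^ 2 / (A * B) := by
                refine Finset.sum_le_sum fun i hi => ?_
                by_cases hzi : 0 < zs i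
                · rw [if_pos hzi]
                · rw [if_neg hzi]
                  exact div_nonneg (mul_nonneg (mul_nonneg (by norm_num) (hzpos i).le)
                    (sq_nonneg _)) (mul_nonneg hA.le hB.le)
              have heq : (∑ i ∈ Ω, 2 * z i * (A - B) ^ 2 / (A * B)) =
                  2 * (A - B) ^ 2 / A := by
                have : ∀ i ∈ Ω, 2 * z i * (A - B) ^ 2 / (A * B) =
                    (2 * (A - B) ^ 2 / (A * B)) * z i := fun i _ => by ring
                rw [Finset.sum_congr rfl this, ← Finset.mul_sum, hsum_z]
                field_simp
              linarith
            linarith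
  end PerH

set_option maxHeartbeats 1000000 in
theorem reverse_pinsker_dilated_entropy' {P K : ℕ} (hK : 0 < K)
    (T : TreeplexData P K) (α : Fin K → ℝ) (hα : ∀ h, 0 < α h)
    (zs : Fin P → ℝ) (hzs : zs ∈ T.set)
    (z : Fin P → ℝ) (hz : z ∈ T.set) (hzpos : ∀ i, 0 < z i) :
    (∑ i, α (T.owner i) * zs i * Real.log (T.q zs i / T.q z i)) ≤
      sSup (Set.range α) *
        ((∑ i ∈ Finset.univ.filter fun i => 0 < zs i,
            (4 * (P : ℝ) / zs i) * ((zs i - z i) ^ 2 / T.q z i))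
          + ∑ i ∈ Finset.univ.filter fun i => ¬ 0 < zs i,
              T.parentVal zs (T.owner i) * T.q z i) ∧
    sSup (Set.range α) *
        ((∑ i ∈ Finset.univ.filter fun i => 0 < zs i,
            (4 * (P : ℝ) / zs i) * ((zs i - z i) ^ 2 / T.q z i))
          + ∑ i ∈ Finset.univ.filter fun i => ¬ 0 < zs i,
              T.parentVal zs (T.owner i) * T.q z i) ≤
      4 * (P : ℝ) * sSup (Set.range α) * (∑ i, |zs i - z i|) /
        sInf ((fun i => zs i * z i) '' {i | 0 < zs i}) := by
  have hKne : Nonempty (Fin K) := Fin.pos_iff_nonempty.mp hK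
  set M := sSup (Set.range α) with hMdef
  have hMub : ∀ h, α h ≤ M := fun h =>
    le_csSup (Set.finite_range α).bddAbove ⟨h, rfl⟩
  have hM0 : 0 ≤ M := le_trans (hα (Classical.arbitrary _)).le (hMub _)
  clear_value M
  have hsurj : Function.Surjective T.owner := owner_surjective T z hz hzpos
  have hKP : K ≤ P := by simpa using Fintype.card_le_of_surjective T.owner hsurj
  have hP : 1 ≤ P := le_trans hK hKP
  have hPr : (1:ℝ) ≤ (P:ℝ) := by exact_mod_cast hP
  have hKr : (K:ℝ) ≤ (P:ℝ) := by exact_mod_cast hKP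
  have hBpos : ∀ h, 0 < T.parentVal z h := parentVal_pos T z hzpos
  have hq_pos : ∀ i, 0 < T.q z i := fun i => div_pos (hzpos i) (hBpos _)
  have hGterm : ∀ i, 0 ≤ 2 * (zs i - z i) ^ 2 / (zs i * T.q z i) := fun i =>
    div_nonneg (by positivity) (mul_nonneg (hzs.1 i) (hq_pos i).le)
  set G : ℝ := ∑ i ∈ Finset.univ.filter (fun i => 0 < zs i),
      2 * (zs i - z i) ^ 2 / (zs i * T.q z i) with hGdef
  have hG0 : 0 ≤ G := Finset.sum_nonneg fun i _ => hGterm i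
  set S1 : ℝ := ∑ i ∈ Finset.univ.filter (fun i => 0 < zs i),
      (4 * (P : ℝ) / zs i) * ((zs i - z i) ^ 2 / T.q z i) with hS1def
  set S2 : ℝ := ∑ i ∈ Finset.univ.filter (fun i => ¬ 0 < zs i),
      T.parentVal zs (T.owner i) * T.q z i with hS2def
  set N : Fin P → ℝ := fun i =>
      if 0 < zs i then 2 * (zs i - z i) ^ 2 / (zs i * T.q z i)
      else T.parentVal zs (T.owner i) * T.q z i with hNdef
  have hsplitN : ∑ i, N i = G + S2 := Finset.sum_ite _ _
  -- the fiber sums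
  have hfiber : (∑ i, α (T.owner i) * zs i * Real.log (T.q zs i / T.q z i)) =
      ∑ h : Fin K, α h * ∑ i ∈ Finset.univ.filter (fun i => T.owner i = h),
        zs i * Real.log (T.q zs i / T.q z i) := by
    rw [← Finset.sum_fiberwise Finset.univ T.owner
        (fun i => α (T.owner i) * zs i * Real.log (T.q zs i / T.q z i))]
    refine Finset.sum_congr rfl fun h _ => ?_
    rw [Finset.mul_sum]
    refine Finset.sum_congr rfl fun i hi => ?_
    rw [(Finset.mem_filter.mp hi).2]; ring
  have hRh : ∀ h : Fin K,
      2 * (T.parentVal zs h - T.parentVal z h) ^ 2 / T.parentVal zs h ≤ G := by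
    intro h
    cases hp : T.parent h with
    | none =>
      have h1 : T.parentVal zs h = 1 := by simp [TreeplexData.parentVal, hp]
      have h2 : T.parentVal z h = 1 := by simp [TreeplexData.parentVal, hp]
      rw [h1, h2]
      simpa using hG0
    | some j =>
      have h1 : T.parentVal zs h = zs j := by simp [TreeplexData.parentVal, hp]
      have h2 : T.parentVal z h = z j := by simp [TreeplexData.parentVal, hp]
      rw [h1, h2]
      rcases (hzs.1 j).eq_or_lt with h0 | h0
      · rw [← h0, div_zero]; exact hG0
      · have hqj : zs j * T.q z j ≤ zs j := by
          have h3 : T.q z j ≤ 1 :=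
            (div_le_one (hBpos _)).mpr (coord_le_parentVal T z hz j)
          nlinarith
        have hterm : 2 * (zs j - z j) ^ 2 / zs j ≤
            2 * (zs j - z j) ^ 2 / (zs j * T.q z j) := by
          apply div_le_div_of_nonneg_left (by positivity)
            (mul_pos h0 (hq_pos j)) hqj
        refine hterm.trans ?_
        exact Finset.single_le_sum (fun i _ => hGterm i) (by simpa using h0)
  have main1 : (∑ i, α (T.owner i) * zs i * Real.log (T.q zs i / T.q z i)) ≤
      M * (S1 + S2) := by
    have step1 : (∑ i, α (T.owner i) * zs i * Real.log (T.q zs i / T.q z i)) ≤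
        M * ((∑ i, N i) + (K:ℝ) * G) := by
      rw [hfiber]
      calc ∑ h : Fin K, α h * ∑ i ∈ Finset.univ.filter (fun i => T.owner i = h),
              zs i * Real.log (T.q zs i / T.q z i)
          ≤ ∑ h : Fin K, M * ((∑ i ∈ Finset.univ.filter (fun i => T.owner i = h), N i)
              + 2 * (T.parentVal zs h - T.parentVal z h) ^ 2 / T.parentVal zs h) := by
            refine Finset.sum_le_sum fun h _ => ?_
            obtain ⟨hpos, hub⟩ := per_h T zs z hzs hz hzpos h
            calc α h * ∑ i ∈ Finset.univ.filter (fun i => T.owner i = h),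
                  zs i * Real.log (T.q zs i / T.q z i)
                ≤ M * ∑ i ∈ Finset.univ.filter (fun i => T.owner i = h),
                  zs i * Real.log (T.q zs i / T.q z i) :=
                  mul_le_mul_of_nonneg_right (hMub h) hpos
              _ ≤ M * ((∑ i ∈ Finset.univ.filter (fun i => T.owner i = h), N i)
                  + 2 * (T.parentVal zs h - T.parentVal z h) ^ 2 / T.parentVal zs h) :=
                  mul_le_mul_of_nonneg_left hub hM0
        _ = M * ((∑ h : Fin K, ∑ i ∈ Finset.univ.filter (fun i => T.owner i = h), N i)
            + ∑ h : Fin K,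
              2 * (T.parentVal zs h - T.parentVal z h) ^ 2 / T.parentVal zs h) := by
            rw [← Finset.mul_sum, Finset.sum_add_distrib]
        _ = M * ((∑ i, N i)
            + ∑ h : Fin K,
              2 * (T.parentVal zs h - T.parentVal z h) ^ 2 / T.parentVal zs h) := by
            rw [Finset.sum_fiberwise]
        _ ≤ M * ((∑ i, N i) + (K:ℝ) * G) := by
            refine mul_le_mul_of_nonneg_left ?_ hM0
            have hs : (∑ h : Fin K,
                2 * (T.parentVal zs h - T.parentVal z h) ^ 2 / T.parentVal zs h) ≤
                ∑ _h : Fin K, G := Finset.sum_le_sum fun h _ => hRh h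
            rw [Finset.sum_const, Finset.card_univ, Fintype.card_fin,
              nsmul_eq_mul] at hs
            linarith
    refine step1.trans (mul_le_mul_of_nonneg_left ?_ hM0)
    rw [hsplitN]
    have hGS1 : G + (K:ℝ) * G ≤ S1 := by
      have heq : G + (K:ℝ) * G = ∑ i ∈ Finset.univ.filter (fun i => 0 < zs i),
          (1 + (K:ℝ)) * (2 * (zs i - z i) ^ 2 / (zs i * T.q z i)) := by
        rw [← Finset.mul_sum, ← hGdef]; ring
      rw [heq, hS1def]
      refine Finset.sum_le_sum fun i hi => ?_
      have hzi : 0 < zs i := (Finset.mem_filter.mp hi).2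
      have h1 : (4 * (P:ℝ) / zs i) * ((zs i - z i) ^ 2 / T.q z i) =
          (4 * (P:ℝ) * (zs i - z i) ^ 2) / (zs i * T.q z i) :=
        div_mul_div_comm _ _ _ _
      have h2 : (1 + (K:ℝ)) * (2 * (zs i - z i) ^ 2 / (zs i * T.q z i)) =
          ((1 + (K:ℝ)) * (2 * (zs i - z i) ^ 2)) / (zs i * T.q z i) :=
        (mul_div_assoc _ _ _).symm
      rw [h1, h2]
      apply div_le_div_of_nonneg_right _ (mul_nonneg hzi.le (hq_pos i).le)
      nlinarith [sq_nonneg (zs i - z i)]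
    linarith
  -- second part
  have hfin : ((fun i => zs i * z i) '' {i | 0 < zs i}).Finite :=
    Set.Finite.image _ (Set.toFinite _)
  obtain ⟨h₀, hroot⟩ := exists_root T hK
  have hA1 : T.parentVal zs h₀ = 1 := by simp [TreeplexData.parentVal, hroot]
  have hsupp : ∃ i, 0 < zs i := by
    by_contra hc; push_neg at hc
    have h1 : (∑ i ∈ Finset.univ.filter (fun i => T.owner i = h₀), zs i) = 0 :=
      Finset.sum_eq_zero fun i _ => le_antisymm (hc i) (hzs.1 i)
    rw [hzs.2 h₀, hA1] at h1
    norm_num at h1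
  obtain ⟨i₁, hi₁⟩ := hsupp
  have hne : ((fun i => zs i * z i) '' {i | 0 < zs i}).Nonempty :=
    ⟨_, ⟨i₁, hi₁, rfl⟩⟩
  set m := sInf ((fun i => zs i * z i) '' {i | 0 < zs i}) with hmdef
  obtain ⟨i₀, hi₀, hmi₀⟩ := Set.Nonempty.csInf_mem hne hfin
  have hm_pos : 0 < m := by
    rw [hmdef, ← hmi₀]; exact mul_pos hi₀ (hzpos i₀)
  have hm_one : m ≤ 1 := by
    rw [hmdef, ← hmi₀]
    exact mul_le_one₀ (coord_le_one T zs hzs i₀) (hzpos i₀).le (coord_le_one T z hz i₀)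
  have hm_le : ∀ i, 0 < zs i → m ≤ zs i * z i := fun i hi =>
    csInf_le hfin.bddBelow ⟨i, hi, rfl⟩
  clear_value m
  have habs1 : ∀ i, |zs i - z i| ≤ 1 := by
    intro i
    rw [abs_sub_le_iff]
    constructor
    · linarith [coord_le_one T zs hzs i, (hzpos i).le]
    · linarith [coord_le_one T z hz i, hzs.1 i]
  have hterm1 : ∀ i ∈ Finset.univ.filter (fun i => 0 < zs i),
      (4 * (P:ℝ) / zs i) * ((zs i - z i) ^ 2 / T.q z i) ≤
        4 * (P:ℝ) * |zs i - z i| / m := by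
    intro i hi
    have ha : 0 < zs i := (Finset.mem_filter.mp hi).2
    have hb : 0 < z i := hzpos i
    have hB : 0 < T.parentVal z (T.owner i) := hBpos _
    have hB1 : T.parentVal z (T.owner i) ≤ 1 := parentVal_le_one T z hz _
    rw [TreeplexData.q]
    have h1 : (zs i - z i) ^ 2 / (z i / T.parentVal z (T.owner i)) =
        (zs i - z i) ^ 2 * T.parentVal z (T.owner i) / z i := by
      rw [div_div_eq_mul_div]
    rw [h1, div_mul_div_comm]
    rw [div_le_div_iff₀ (mul_pos ha hb) hm_pos]
    have hX : (zs i - z i) ^ 2 = |zs i - z i| ^ 2 := (sq_abs _).symm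
    have hXB : |zs i - z i| * T.parentVal z (T.owner i) ≤ 1 :=
      mul_le_one₀ (habs1 i) hB.le hB1
    have hmab : m ≤ zs i * z i := hm_le i ha
    have key : |zs i - z i| * T.parentVal z (T.owner i) * m ≤ zs i * z i := by
      nlinarith [hXB, hm_pos]
    calc 4 * (P:ℝ) * ((zs i - z i) ^ 2 * T.parentVal z (T.owner i)) * m
        = (4 * (P:ℝ) * |zs i - z i|) * (|zs i - z i| * T.parentVal z (T.owner i) * m) := by
          rw [← sq_abs (zs i - z i)]; ring
      _ ≤ (4 * (P:ℝ) * |zs i - z i|) * (zs i * z i) :=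
          mul_le_mul_of_nonneg_left key (by positivity)
      _ = 4 * (P:ℝ) * |zs i - z i| * (zs i * z i) := by ring
  have hterm2 : ∀ i ∈ Finset.univ.filter (fun i => ¬ 0 < zs i),
      T.parentVal zs (T.owner i) * T.q z i ≤ 4 * (P:ℝ) * |zs i - z i| / m := by
    intro i hi
    have hzi : zs i = 0 :=
      le_antisymm (not_lt.mp (Finset.mem_filter.mp hi).2) (hzs.1 i)
    have hb : 0 < z i := hzpos i
    have habs : |zs i - z i| = z i := by
      rw [hzi, zero_sub, abs_neg, abs_of_pos hb]
    rw [habs, TreeplexData.q]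
    cases hp : T.parent (T.owner i) with
    | none =>
      have hAv : T.parentVal zs (T.owner i) = 1 := by simp [TreeplexData.parentVal, hp]
      have hBv : T.parentVal z (T.owner i) = 1 := by simp [TreeplexData.parentVal, hp]
      rw [hAv, hBv, div_one, one_mul, le_div_iff₀ hm_pos]
      nlinarith [mul_le_mul_of_nonneg_left hm_one hb.le,
        mul_le_mul_of_nonneg_left (show (1:ℝ) ≤ 4 * (P:ℝ) by linarith) hb.le]
    | some j =>
      have hAv : T.parentVal zs (T.owner i) = zs j := by simp [TreeplexData.parentVal, hp]
      have hBv : T.parentVal z (T.owner i) = z j := by simp [TreeplexData.parentVal, hp]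
      rw [hAv, hBv]
      rcases (hzs.1 j).eq_or_lt with h0 | h0
      · rw [← h0, zero_mul]
        exact div_nonneg (mul_nonneg (by positivity) hb.le) hm_pos.le
      · have hzj : 0 < z j := hzpos j
        have hmj : m ≤ zs j * z j := hm_le j h0
        have hzj1 : zs j ≤ 1 := coord_le_one T zs hzs j
        rw [mul_div_assoc', div_le_div_iff₀ hzj hm_pos]
        nlinarith [mul_pos hb hm_pos, mul_nonneg (mul_nonneg hb.le hzj.le)
          (sub_nonneg.mpr hPr), mul_nonneg hb.le (sub_nonneg.mpr
            (le_trans hmj (by nlinarith)))]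
  have main2 : M * (S1 + S2) ≤ 4 * (P:ℝ) * M * (∑ i, |zs i - z i|) / m := by
    have hS : S1 + S2 ≤ ∑ i, 4 * (P:ℝ) * |zs i - z i| / m := by
      rw [← Finset.sum_filter_add_sum_filter_not Finset.univ (fun i => 0 < zs i)
        (fun i => 4 * (P:ℝ) * |zs i - z i| / m)]
      exact add_le_add (Finset.sum_le_sum hterm1) (Finset.sum_le_sum hterm2)
    have hnorm : (∑ i, 4 * (P:ℝ) * |zs i - z i| / m) =
        4 * (P:ℝ) * (∑ i, |zs i - z i|) / m := by
      rw [← Finset.sum_div, ← Finset.mul_sum]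
    calc M * (S1 + S2) ≤ M * (4 * (P:ℝ) * (∑ i, |zs i - z i|) / m) :=
          mul_le_mul_of_nonneg_left (hS.trans_eq hnorm) hM0
      _ = 4 * (P:ℝ) * M * (∑ i, |zs i - z i|) / m := by ring
  exact ⟨main1, main2⟩

/-- Lemma 13: reverse-Pinsker-type bound for the dilated entropy on
a treeplex.  For `z* ∈ Z` and `z ∈ Z` with all coordinates positive (and
`q_i = z_i / z_{p_i}`, `q*_i = z*_i / z*_{p_i}`),
`D_{Ψ^dil_α}(z*, z) ≤ ‖α‖_∞ ( ∑_{i∈supp(z*)} (4P/z*_i)(z*_i − z_i)²/q_i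
  + ∑_{i∉supp(z*)} z*_{p_i} q_i )
  ≤ 4P‖α‖_∞ ‖z* − z‖₁ / (min_{i∈supp(z*)} z*_i z_i)`. -/
theorem reverse_pinsker_dilated_entropy {P K : ℕ} (hK : 0 < K)
    (T : TreeplexData P K) (α : Fin K → ℝ) (hα : ∀ h, 0 < α h)
    (zs : Fin P → ℝ) (hzs : zs ∈ T.set)
    (z : Fin P → ℝ) (hz : z ∈ T.set) (hzpos : ∀ i, 0 < z i) :
    dilEntBreg T α zs z ≤
      sSup (Set.range α) *
        ((∑ i ∈ Finset.univ.filter fun i => 0 < zs i,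
            (4 * (P : ℝ) / zs i) * ((zs i - z i) ^ 2 / T.q z i))
          + ∑ i ∈ Finset.univ.filter fun i => ¬ 0 < zs i,
              T.parentVal zs (T.owner i) * T.q z i) ∧
    sSup (Set.range α) *
        ((∑ i ∈ Finset.univ.filter fun i => 0 < zs i,
            (4 * (P : ℝ) / zs i) * ((zs i - z i) ^ 2 / T.q z i))
          + ∑ i ∈ Finset.univ.filter fun i => ¬ 0 < zs i,
              T.parentVal zs (T.owner i) * T.q z i) ≤
      4 * (P : ℝ) * sSup (Set.range α) * norm1 (zs - z) /
        sInf ((fun i => zs i * z i) '' {i | 0 < zs i}) := by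
  have h := reverse_pinsker_dilated_entropy' hK T α hα zs hzs z hz hzpos
  have hn : norm1 (zs - z) = ∑ i, |zs i - z i| := by
    simp [norm1, Pi.sub_apply]
  rw [show dilEntBreg T α zs z =
      ∑ i, α (T.owner i) * zs i * Real.log (T.q zs i / T.q z i) from rfl, hn]
  exact h
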